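/- arXiv:1807.09070 — 6 statements merged into one kernel-verified Lean document; each statement's English description precedes it below -/
import Mathlib

section
/- For each integer y ≥ 0 define c_y := 2^{2^{m!}} if y = m! for some integer m ≥ 1, and c_y := 1 otherwise. Then for every integer b ≥ 4, the number ∏_{y=0}^∞ (1 + (1/c_y) · (1/b^{2^y})) is transcendental. -/
/-!
Write `x = ∏ (1 + a y)` with `a y = (c y)⁻¹ * b ^ (-2 ^ y)`. The doubling products
`∏_{i < k} (1 + v ^ 2 ^ i) = (1 - v ^ 2 ^ k) / (1 - v)` telescope, so if `c = 1` on a block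
`N ≤ y < M` then the rational number `r = (∏_{y < N} (1 + a y)) / (1 - b ^ (-2 ^ N))`, whose
denominator is at most `b ^ 2 ^ (N + 2)`, satisfies `0 < r - x ≤ 2 b ^ (-2 ^ M)`; the strict
inequality comes from `c M > 1`, which breaks the telescoping at `M`. The blocks
`m ! < y < (m + 1)!` make `2 ^ M` arbitrarily large compared with `2 ^ N`, so `x` is a Liouville
number.
-/

open Finset

theorem pow_two_pow_add {M : Type*} [Monoid M] (u : M) (i k : ℕ) :
    u ^ 2 ^ (i + k) = (u ^ 2 ^ k) ^ 2 ^ i := by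
  rw [← pow_mul, ← pow_add, add_comm]

theorem mul_prod_range_one_add_pow_two_pow {R : Type*} [CommRing R] (v : R) (n : ℕ) :
    (1 - v) * ∏ i ∈ range n, (1 + v ^ 2 ^ i) = 1 - v ^ 2 ^ n := by
  induction n with
  | zero => simp
  | succ n ih => rw [prod_range_succ, ← mul_assoc, ih, pow_succ, pow_mul]; ring

section DominatedByPowTwoPow

variable {f : ℕ → ℝ} {t : ℝ}

theorem one_sub_mul_prod_range_one_add_le (hf0 : ∀ i, 0 ≤ f i) (hft : ∀ i, f i ≤ t ^ 2 ^ i)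
    (ht : t ≤ 1) (n : ℕ) : (1 - t) * ∏ i ∈ range n, (1 + f i) ≤ 1 - t ^ 2 ^ n := by
  rw [← mul_prod_range_one_add_pow_two_pow]
  gcongr with i
  · exact fun i _ => by linarith [hf0 i]
  · exact hft i

theorem summable_of_le_pow_two_pow (hf0 : ∀ i, 0 ≤ f i) (hft : ∀ i, f i ≤ t ^ 2 ^ i)
    (ht : t < 1) : Summable f := by
  have ht0 : 0 ≤ t := by simpa using (hf0 0).trans (hft 0)
  refine (summable_geometric_of_lt_one ht0 ht).of_nonneg_of_le hf0 fun i => (hft i).trans ?_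
  exact pow_le_pow_of_le_one ht0 ht.le Nat.lt_two_pow_self.le

theorem multipliable_one_add_of_le_pow_two_pow (hf0 : ∀ i, 0 ≤ f i)
    (hft : ∀ i, f i ≤ t ^ 2 ^ i) (ht : t < 1) : Multipliable fun i => 1 + f i :=
  Real.multipliable_one_add_of_summable (summable_of_le_pow_two_pow hf0 hft ht)

theorem one_le_tprod_one_add (hf0 : ∀ i, 0 ≤ f i) (hf : Multipliable fun i => 1 + f i) :
    1 ≤ ∏' i, (1 + f i) :=
  le_hasProd_of_le_prod hf.hasProd fun _ => one_le_prod fun i _ => by linarith [hf0 i]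

theorem one_sub_mul_tprod_one_add_le (hf0 : ∀ i, 0 ≤ f i) (hft : ∀ i, f i ≤ t ^ 2 ^ i)
    (ht : t < 1) : (1 - t) * ∏' i, (1 + f i) ≤ 1 := by
  have ht0 : 0 ≤ t := by simpa using (hf0 0).trans (hft 0)
  rw [mul_comm, ← le_div_iff₀ (sub_pos.2 ht)]
  refine (multipliable_one_add_of_le_pow_two_pow hf0 hft ht).tprod_le_of_prod_range_le
    fun n => ?_
  rw [le_div_iff₀ (sub_pos.2 ht), mul_comm]
  linarith [one_sub_mul_prod_range_one_add_le hf0 hft ht.le n, pow_nonneg ht0 (2 ^ n)]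

/-- Since `∏ (1 + t ^ 2 ^ i) = (1 - t)⁻¹`, lowering the first factor below `1 + t` pushes the
product strictly below `(1 - t)⁻¹`. -/
theorem one_sub_mul_tprod_one_add_lt (hf0 : ∀ i, 0 ≤ f i) (hft : ∀ i, f i ≤ t ^ 2 ^ i)
    (ht : t < 1) (hf0t : f 0 < t) : (1 - t) * ∏' i, (1 + f i) < 1 := by
  have ht0 : 0 ≤ t := by linarith [hf0 0]
  have hft' : ∀ i, f (i + 1) ≤ (t ^ 2) ^ 2 ^ i := fun i => by
    rw [← pow_mul, ← pow_succ']
    exact hft (i + 1)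
  have htail : (1 - t ^ 2) * ∏' i, (1 + f (i + 1)) ≤ 1 :=
    one_sub_mul_tprod_one_add_le (fun i => hf0 _) hft' (by nlinarith)
  have hmul : Multipliable fun i => 1 + f (i + 1) :=
    multipliable_one_add_of_le_pow_two_pow (fun i => hf0 _) hft' (by nlinarith)
  rw [tprod_eq_zero_mul' hmul]
  set T := ∏' i, (1 + f (i + 1))
  have h1 : (1 - t) * ((1 + f 0) * T) * (1 + t) ≤ 1 + f 0 := by
    have : (1 - t) * ((1 + f 0) * T) * (1 + t) = (1 + f 0) * ((1 - t ^ 2) * T) := by ring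
    rw [this]
    exact mul_le_of_le_one_right (by linarith [hf0 0]) htail
  exact lt_of_mul_lt_mul_right (by linarith : _ < 1 * (1 + t)) (by linarith)

end DominatedByPowTwoPow

section LacunaryProduct

variable {f : ℕ → ℝ} {u : ℝ} {N M : ℕ}

theorem one_sub_mul_prod_range_of_eqOn_Ico (hgap : ∀ y ∈ Ico N M, f y = u ^ 2 ^ y)
    (hNM : N ≤ M) :
    (1 - u ^ 2 ^ N) * ∏ y ∈ range M, (1 + f y) =
      (∏ y ∈ range N, (1 + f y)) * (1 - u ^ 2 ^ M) := by
  obtain ⟨k, rfl⟩ := Nat.exists_eq_add_of_le hNM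
  have hblock : ∏ i ∈ range k, (1 + f (N + i)) = ∏ i ∈ range k, (1 + (u ^ 2 ^ N) ^ 2 ^ i) :=
    prod_congr rfl fun i hi => by
      rw [hgap _ (mem_Ico.2 ⟨by omega, by simpa using mem_range.1 hi⟩), add_comm N,
        pow_two_pow_add]
  rw [prod_range_add, hblock, mul_left_comm, mul_prod_range_one_add_pow_two_pow, add_comm N,
    pow_two_pow_add]

theorem prod_range_div_sub_tprod_mem_Ioc (hu0 : 0 ≤ u) (hu1 : u < 1) (hf0 : ∀ y, 0 ≤ f y)
    (hfu : ∀ y, f y ≤ u ^ 2 ^ y) (hNM : N ≤ M) (hgap : ∀ y ∈ Ico N M, f y = u ^ 2 ^ y)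
    (hfM : f M < u ^ 2 ^ M) :
    (∏ y ∈ range N, (1 + f y)) / (1 - u ^ 2 ^ N) - ∏' y, (1 + f y) ∈
      Set.Ioc 0 (u ^ 2 ^ M / (1 - u)) := by
  have hfs : ∀ i, f (i + M) ≤ (u ^ 2 ^ M) ^ 2 ^ i := fun i => pow_two_pow_add u i M ▸ hfu (i + M)
  have hs1 : u ^ 2 ^ M < 1 := pow_lt_one₀ hu0 hu1 (by positivity)
  have hv1 : u ^ 2 ^ N < 1 := pow_lt_one₀ hu0 hu1 (by positivity)
  have htail := multipliable_one_add_of_le_pow_two_pow (fun i => hf0 _) hfs hs1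
  have hsplit : (∏ y ∈ range M, (1 + f y)) * ∏' i, (1 + f (i + M)) = ∏' y, (1 + f y) :=
    Multipliable.prod_mul_tprod_nat_mul' (f := fun y => 1 + f y) htail
  have hprefix : ∏ y ∈ range M, (1 + f y) =
      (∏ y ∈ range N, (1 + f y)) / (1 - u ^ 2 ^ N) * (1 - u ^ 2 ^ M) := by
    rw [div_mul_eq_mul_div, eq_div_iff (by linarith), mul_comm]
    exact one_sub_mul_prod_range_of_eqOn_Ico hgap hNM
  rw [← hsplit, hprefix, mul_assoc, ← mul_one_sub]
  have hT1 := one_le_tprod_one_add (fun i => hf0 _) htail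
  have hTlt := one_sub_mul_tprod_one_add_lt (fun i => hf0 _) hfs hs1 (by simpa using hfM)
  have hr0 : 0 < (∏ y ∈ range N, (1 + f y)) / (1 - u ^ 2 ^ N) :=
    div_pos (one_pos.trans_le (one_le_prod fun y _ => by linarith [hf0 y])) (by linarith)
  have hr : (∏ y ∈ range N, (1 + f y)) / (1 - u ^ 2 ^ N) ≤ 1 / (1 - u) := by
    rw [div_le_div_iff₀ (by linarith) (by linarith), one_mul, mul_comm]
    exact one_sub_mul_prod_range_one_add_le hf0 hfu hu1.le N
  have hgap_le : 1 - (1 - u ^ 2 ^ M) * ∏' i, (1 + f (i + M)) ≤ u ^ 2 ^ M := by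
    linarith [le_mul_of_one_le_right (by linarith : (0 : ℝ) ≤ 1 - u ^ 2 ^ M) hT1]
  refine ⟨mul_pos hr0 (sub_pos.2 hTlt), ?_⟩
  calc _ ≤ 1 / (1 - u) * u ^ 2 ^ M :=
        mul_le_mul hr hgap_le (by linarith) (div_nonneg zero_le_one (by linarith))
    _ = u ^ 2 ^ M / (1 - u) := by ring

end LacunaryProduct

theorem prod_range_le_pow_two_pow {g : ℕ → ℕ} {a : ℕ} (ha : 1 ≤ a) (hg : ∀ y, g y ≤ a ^ 2 ^ y)
    (N : ℕ) : ∏ y ∈ range N, g y ≤ a ^ 2 ^ N := by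
  induction N with
  | zero => simpa using ha
  | succ N ih =>
    rw [prod_range_succ, pow_succ, pow_mul, sq]
    exact Nat.mul_le_mul ih (hg N)

section Denominators

variable {b : ℕ} {c : ℕ → ℕ}

theorem prod_range_mul_pow_sub_one_le (hb : 1 ≤ b) (hcb : ∀ y, c y ≤ b ^ 2 ^ y) (N : ℕ) :
    (∏ y ∈ range N, c y * b ^ 2 ^ y) * (b ^ 2 ^ N - 1) ≤ b ^ 2 ^ (N + 2) := by
  have hprod : ∏ y ∈ range N, c y * b ^ 2 ^ y ≤ b ^ 2 ^ (N + 1) := by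
    refine (prod_range_le_pow_two_pow (a := b ^ 2) (Nat.one_le_pow _ _ hb) (fun y => ?_)
      N).trans_eq ?_
    · calc c y * b ^ 2 ^ y ≤ b ^ 2 ^ y * b ^ 2 ^ y := Nat.mul_le_mul_right _ (hcb y)
        _ = (b ^ 2) ^ 2 ^ y := by ring
    · rw [← pow_mul, pow_succ']
  have hB : b ^ 2 ^ N - 1 ≤ b ^ 2 ^ (N + 1) :=
    (Nat.sub_le _ _).trans (Nat.pow_le_pow_right hb (Nat.pow_le_pow_right two_pos N.le_succ))
  calc _ ≤ b ^ 2 ^ (N + 1) * b ^ 2 ^ (N + 1) := Nat.mul_le_mul hprod hB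
    _ = b ^ 2 ^ (N + 2) := by rw [← sq, ← pow_mul, ← pow_succ]

theorem prod_range_one_add_div_one_sub_eq (hb : 2 ≤ b) (hc : ∀ y, c y ≠ 0) (N : ℕ) :
    (∏ y ∈ range N, (1 + 1 / (c y : ℝ) * (1 / (b : ℝ) ^ 2 ^ y))) / (1 - (1 / (b : ℝ)) ^ 2 ^ N) =
      ((∏ y ∈ range N, (c y * b ^ 2 ^ y + 1)) * b ^ 2 ^ N : ℕ) /
        ((∏ y ∈ range N, c y * b ^ 2 ^ y) * (b ^ 2 ^ N - 1) : ℕ) := by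
  have hB : 1 < b ^ 2 ^ N := Nat.one_lt_pow (by positivity) (by omega)
  have hBR : (1 : ℝ) < (b : ℝ) ^ 2 ^ N := by exact_mod_cast hB
  have hfactor : ∀ y ∈ range N, 1 + 1 / (c y : ℝ) * (1 / (b : ℝ) ^ 2 ^ y) =
      ((c y * b ^ 2 ^ y + 1 : ℕ) : ℝ) / (c y * b ^ 2 ^ y : ℕ) := fun y _ => by
    have : (c y : ℝ) ≠ 0 := by exact_mod_cast hc y
    have : (b : ℝ) ≠ 0 := by positivity
    push_cast
    field_simp
  rw [prod_congr rfl hfactor, prod_div_distrib, one_div_pow]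
  push_cast [Nat.cast_sub hB.le]
  have : (b : ℝ) ^ 2 ^ N - 1 ≠ 0 := by linarith
  have : ∏ y ∈ range N, (c y : ℝ) * (b : ℝ) ^ 2 ^ y ≠ 0 :=
    prod_ne_zero_iff.2 fun y _ => by have := hc y; positivity
  field_simp

theorem one_lt_prod_range_mul_pow_sub_one (hb : 2 ≤ b) (hc : ∀ y, c y ≠ 0) {N : ℕ}
    (hN : 1 ≤ N) : 1 < (∏ y ∈ range N, c y * b ^ 2 ^ y) * (b ^ 2 ^ N - 1) := by
  have hD : 1 ≤ ∏ y ∈ range N, c y * b ^ 2 ^ y :=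
    Nat.one_le_iff_ne_zero.2 (prod_ne_zero_iff.2 fun y _ => mul_ne_zero (hc y) (by positivity))
  have hB : 4 ≤ b ^ 2 ^ N := calc
    4 ≤ b ^ 2 := by nlinarith
    _ ≤ b ^ 2 ^ N := Nat.pow_le_pow_right (by omega) (Nat.le_self_pow (by omega) 2)
  exact (by omega : 1 < b ^ 2 ^ N - 1).trans_le (Nat.le_mul_of_pos_left _ hD)

theorem two_mul_prod_range_mul_pow_sub_one_pow_lt (hb : 2 ≤ b) (hcb : ∀ y, c y ≤ b ^ 2 ^ y)
    {N M n : ℕ} (hexp : 2 ^ (N + 2) * n + 2 ≤ 2 ^ M) :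
    2 * ((∏ y ∈ range N, c y * b ^ 2 ^ y) * (b ^ 2 ^ N - 1)) ^ n < b ^ 2 ^ M := calc
  _ ≤ 2 * (b ^ 2 ^ (N + 2)) ^ n := by
    gcongr
    exact prod_range_mul_pow_sub_one_le (by omega) hcb N
  _ < b ^ 2 * (b ^ 2 ^ (N + 2)) ^ n :=
    Nat.mul_lt_mul_of_pos_right (by nlinarith) (by positivity)
  _ = b ^ (2 ^ (N + 2) * n + 2) := by ring
  _ ≤ b ^ 2 ^ M := Nat.pow_le_pow_right (by omega) hexp

end Denominators

theorem liouville_tprod_one_add_of_gaps {b : ℕ} (hb : 2 ≤ b) {c : ℕ → ℕ} (hc0 : ∀ y, c y ≠ 0)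
    (hcb : ∀ y, c y ≤ b ^ 2 ^ y)
    (hgaps : ∀ n : ℕ, ∃ N M, 1 ≤ N ∧ N ≤ M ∧ 2 ^ (N + 2) * n + 2 ≤ 2 ^ M ∧
      (∀ y ∈ Ico N M, c y = 1) ∧ 2 ≤ c M) :
    Liouville (∏' y, (1 + 1 / (c y : ℝ) * (1 / (b : ℝ) ^ 2 ^ y))) := by
  intro n
  obtain ⟨N, M, hN, hNM, hexp, hgap, hcM⟩ := hgaps n
  have hbR : (2 : ℝ) ≤ b := by exact_mod_cast hb
  have hc1 : ∀ y, (1 : ℝ) ≤ c y := fun y => by exact_mod_cast Nat.one_le_iff_ne_zero.2 (hc0 y)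
  obtain ⟨hpos, hle⟩ := prod_range_div_sub_tprod_mem_Ioc (u := 1 / (b : ℝ))
    (f := fun y => 1 / (c y : ℝ) * (1 / (b : ℝ) ^ 2 ^ y)) (by positivity)
    (by rw [div_lt_one] <;> linarith) (fun y => by positivity)
    (fun y => by
      rw [one_div_pow]
      exact mul_le_of_le_one_left (by positivity) (div_le_one_of_le₀ (hc1 y) (by positivity)))
    hNM (fun y hy => by simp [hgap y hy])
    (by
      rw [one_div_pow]
      refine mul_lt_of_lt_one_left (by positivity) ?_
      rw [div_lt_one (by linarith [hc1 M])]
      exact_mod_cast hcM)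
  rw [prod_range_one_add_div_one_sub_eq hb hc0 N] at hpos hle
  set q := (∏ y ∈ range N, c y * b ^ 2 ^ y) * (b ^ 2 ^ N - 1)
  have hq1 : 1 < q := one_lt_prod_range_mul_pow_sub_one hb hc0 hN
  have hq : 2 * q ^ n < b ^ 2 ^ M := two_mul_prod_range_mul_pow_sub_one_pow_lt hb hcb hexp
  refine ⟨((∏ y ∈ range N, (c y * b ^ 2 ^ y + 1)) * b ^ 2 ^ N : ℕ), q, by exact_mod_cast hq1,
    ?_, ?_⟩
  all_goals simp only [Int.cast_natCast]
  · exact (sub_pos.1 hpos).ne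
  · rw [abs_sub_comm, abs_of_pos hpos]
    have hb2 : 1 / (1 - 1 / (b : ℝ)) ≤ 2 := by
      have : 2 / (b : ℝ) ≤ 1 := by rw [div_le_one] <;> linarith
      rw [div_le_iff₀ (by rw [sub_pos, div_lt_one] <;> linarith), mul_sub, mul_one_div]
      linarith
    have hqR : 2 * (q : ℝ) ^ n < (b : ℝ) ^ 2 ^ M := by exact_mod_cast hq
    calc _ ≤ (1 / (b : ℝ)) ^ 2 ^ M / (1 - 1 / (b : ℝ)) := hle
      _ = 1 / (1 - 1 / (b : ℝ)) / (b : ℝ) ^ 2 ^ M := by ring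
      _ ≤ 2 / (b : ℝ) ^ 2 ^ M := by gcongr
      _ < 1 / (q : ℝ) ^ n := by
        rw [div_lt_div_iff₀ (by positivity) (by positivity)]
        linarith

open Nat in
theorem ne_factorial_of_lt_of_lt_factorial_succ {m y : ℕ} (h₁ : m ! < y) (h₂ : y < (m + 1)!)
    (k : ℕ) : y ≠ k ! := by
  rintro rfl
  rcases le_or_gt k m with h | h
  · exact (factorial_le h).not_gt h₁
  · exact (factorial_le h).not_gt h₂

open Nat in
theorem two_pow_factorial_mul_add_two_le (n : ℕ) :
    2 ^ ((n + 4)! + 1 + 2) * n + 2 ≤ 2 ^ (n + 5)! := by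
  have hF : (n + 4)! + 3 + n ≤ (n + 5)! := by
    rw [factorial_succ (n + 4)]
    nlinarith [factorial_pos (n + 4)]
  have h2 : 2 ≤ 2 ^ ((n + 4)! + 3) := le_self_pow (by omega) 2
  calc 2 ^ ((n + 4)! + 1 + 2) * n + 2 ≤ 2 ^ ((n + 4)! + 3) * 2 ^ n := by
        nlinarith [n.lt_two_pow_self]
    _ ≤ 2 ^ (n + 5)! := by rw [← pow_add]; exact Nat.pow_le_pow_right two_pos hF

/-- With `c_y := 2^{2^{m!}}` if `y = m!` for some `m ≥ 1` and `c_y := 1` otherwise,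
for every integer `b ≥ 4` the number `∏_{y=0}^∞ (1 + (1/c_y)·(1/b^{2^y}))` is transcendental. -/
theorem stmt_2
    (c : ℕ → ℕ)
    (hc : ∀ y, (∃ m : ℕ, 1 ≤ m ∧ y = Nat.factorial m) → c y = 2 ^ (2 ^ y))
    (hc' : ∀ y, (¬ ∃ m : ℕ, 1 ≤ m ∧ y = Nat.factorial m) → c y = 1)
    (b : ℕ) (hb : 4 ≤ b) :
    Transcendental ℚ (∏' y : ℕ, (1 + (1 / (c y : ℝ)) * (1 / (b : ℝ) ^ (2 ^ y)))) := by
  have hcases : ∀ y, c y = 2 ^ 2 ^ y ∨ c y = 1 := fun y => by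
    by_cases h : ∃ m : ℕ, 1 ≤ m ∧ y = Nat.factorial m
    exacts [.inl (hc y h), .inr (hc' y h)]
  have hgaps (n : ℕ) : ∃ N M, 1 ≤ N ∧ N ≤ M ∧ 2 ^ (N + 2) * n + 2 ≤ 2 ^ M ∧
      (∀ y ∈ Ico N M, c y = 1) ∧ 2 ≤ c M := by
    refine ⟨(n + 4).factorial + 1, (n + 5).factorial, by omega,
      (Nat.factorial_lt (by omega)).2 (by omega), two_pow_factorial_mul_add_two_le n,
      fun y hy => hc' y ?_, ?_⟩
    · rintro ⟨k, -, rfl⟩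
      obtain ⟨h₁, h₂⟩ := mem_Ico.1 hy
      exact ne_factorial_of_lt_of_lt_factorial_succ h₁ h₂ k rfl
    · rw [hc _ ⟨n + 5, by omega, rfl⟩]
      exact Nat.le_self_pow (by positivity) 2
  have hL := liouville_tprod_one_add_of_gaps (by omega : 2 ≤ b)
    (fun y => by rcases hcases y with h | h <;> simp [h])
    (fun y => by
      rcases hcases y with h | h <;> rw [h]
      exacts [Nat.pow_le_pow_left (by omega) _, Nat.one_le_pow _ _ (by omega)]) hgaps
  exact fun halg => hL.transcendental ((IsFractionRing.isAlgebraic_iff ℤ ℚ ℝ).mpr halg)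
end

section
/- Let A_∞ = (b(n))_{n=0}^∞ be the (L,(q_n),(μ_n))-TM sequence over the alphabet a_j = e^{2πi j / L} (0 ≤ j ≤ L−1), and let G(z) := Σ_{n=0}^∞ b(n) z^n be its generating function. Then for |z| < 1, G(z) = ∏_{y=0}^∞ (1 + Σ_{s=1}^{q_{y+1}−1} e^{2πi μ_y(s) / L} z^{s ∏_{j=0}^{y} q_j}). -/
/-!
Split the first `Q (N + 1)` terms of the series into `q (N + 1)` blocks of length `Q N`: by the
recursion, block `l ≥ 1` is block `0` multiplied by `e(μ_N(l)) z ^ (l Q_N)`, so the partial sum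
over the first `Q N` terms is the `N`-th partial product. For `|z| < 1` both sides converge, the
`y`-th factor differing from `1` by `O(|z| ^ Q_y)`, and `Q N → ∞`.
-/

open Finset

lemma sum_range_mul_eq_sum_sum {M : Type*} [AddCommMonoid M] (f : ℕ → M) (a b : ℕ) :
    ∑ n ∈ range (a * b), f n = ∑ l ∈ range a, ∑ r ∈ range b, f (l * b + r) := by
  induction a with
  | zero => simp
  | succ a ih => rw [sum_range_succ, ← ih, Nat.succ_mul, sum_range_add]

lemma sum_range_eq_add_sum_Icc {M : Type*} [AddCommMonoid M] (f : ℕ → M) {n : ℕ} (hn : 1 ≤ n) :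
    ∑ l ∈ range n, f l = f 0 + ∑ l ∈ Icc 1 (n - 1), f l := by
  obtain ⟨m, rfl⟩ := Nat.exists_eq_add_of_le' hn
  rw [range_eq_Ico, sum_eq_sum_Ico_succ_bot (by omega), Nat.add_sub_cancel,
    Ico_add_one_right_eq_Icc]

section BlockStructure

variable {q Q : ℕ → ℕ}

lemma strictMono_of_succ_eq_mul (hQ0 : 0 < Q 0) (hQsucc : ∀ n, Q (n + 1) = q (n + 1) * Q n)
    (hq : ∀ n, 2 ≤ q (n + 1)) : StrictMono Q := by
  have hpos : ∀ n, 0 < Q n := by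
    intro n
    induction n with
    | zero => exact hQ0
    | succ n ih => rw [hQsucc]; exact Nat.mul_pos (by linarith [hq n]) ih
  refine strictMono_nat_of_lt_succ fun n => ?_
  rw [hQsucc]
  nlinarith [hq n, hpos n]

theorem sum_range_mul_pow_eq_prod_one_add {R : Type*} [CommSemiring R]
    (hQ0 : Q 0 = 1) (hQsucc : ∀ n, Q (n + 1) = q (n + 1) * Q n) (hq : ∀ n, 1 ≤ q (n + 1))
    {b : ℕ → R} {c : ℕ → ℕ → R} (hb0 : b 0 = 1)
    (hrec : ∀ n l r, 1 ≤ l → l ≤ q (n + 1) - 1 → r < Q n → b (l * Q n + r) = c n l * b r)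
    (z : R) (N : ℕ) :
    ∑ n ∈ range (Q N), b n * z ^ n =
      ∏ y ∈ range N, (1 + ∑ s ∈ Icc 1 (q (y + 1) - 1), c y s * z ^ (s * Q y)) := by
  induction N with
  | zero => simp [hQ0, hb0]
  | succ N ih =>
    have hblock : ∀ l ∈ Icc 1 (q (N + 1) - 1),
        ∑ r ∈ range (Q N), b (l * Q N + r) * z ^ (l * Q N + r) =
          c N l * z ^ (l * Q N) * ∑ r ∈ range (Q N), b r * z ^ r := by
      intro l hl
      rw [mul_sum]
      refine sum_congr rfl fun r hr => ?_
      rw [mem_Icc] at hl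
      rw [hrec N l r hl.1 hl.2 (mem_range.mp hr), pow_add]
      ring
    rw [hQsucc, sum_range_mul_eq_sum_sum, sum_range_eq_add_sum_Icc _ (hq N), sum_congr rfl hblock,
      prod_range_succ, ← ih, ← sum_mul]
    simp only [zero_mul, zero_add]
    ring

end BlockStructure

section Analytic

variable {𝕜 : Type*} [NormedField 𝕜]

lemma norm_sum_Icc_mul_pow_mul_le {c : ℕ → 𝕜} (hc : ∀ s, ‖c s‖ ≤ 1) {z : 𝕜} (hz : ‖z‖ < 1)
    (m : ℕ) {K : ℕ} (hK : 0 < K) :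
    ‖∑ s ∈ Icc 1 m, c s * z ^ (s * K)‖ ≤ ‖z‖ ^ K / (1 - ‖z‖) := by
  obtain ⟨k, rfl⟩ := Nat.exists_eq_add_of_le' hK
  have hz0 := norm_nonneg z
  calc ‖∑ s ∈ Icc 1 m, c s * z ^ (s * (k + 1))‖
      ≤ ∑ s ∈ Icc 1 m, ‖z‖ ^ k * ‖z‖ ^ s := by
        refine (norm_sum_le _ _).trans (sum_le_sum fun s hs => ?_)
        rw [norm_mul, norm_pow, ← pow_add]
        refine (mul_le_of_le_one_left (by positivity) (hc s)).trans
          (pow_le_pow_of_le_one hz0 hz.le ?_)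
        nlinarith [(mem_Icc.mp hs).1]
    _ = ‖z‖ ^ k * ∑ s ∈ Ico 1 (m + 1), ‖z‖ ^ s := by rw [← mul_sum, Ico_add_one_right_eq_Icc]
    _ ≤ ‖z‖ ^ k * (‖z‖ ^ 1 / (1 - ‖z‖)) := by gcongr; exact geom_sum_Ico_le_of_lt_one hz0 hz
    _ = ‖z‖ ^ (k + 1) / (1 - ‖z‖) := by ring

theorem tsum_mul_pow_eq_tprod_one_add [CompleteSpace 𝕜] {q Q : ℕ → ℕ}
    (hQ0 : Q 0 = 1) (hQsucc : ∀ n, Q (n + 1) = q (n + 1) * Q n) (hq : ∀ n, 2 ≤ q (n + 1))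
    {b : ℕ → 𝕜} {c : ℕ → ℕ → 𝕜} (hb0 : b 0 = 1) (hb : ∀ n, ‖b n‖ ≤ 1)
    (hc : ∀ n s, ‖c n s‖ ≤ 1)
    (hrec : ∀ n l r, 1 ≤ l → l ≤ q (n + 1) - 1 → r < Q n → b (l * Q n + r) = c n l * b r)
    {z : 𝕜} (hz : ‖z‖ < 1) :
    ∑' n, b n * z ^ n =
      ∏' y, (1 + ∑ s ∈ Icc 1 (q (y + 1) - 1), c y s * z ^ (s * Q y)) := by
  have hQmono : StrictMono Q := strictMono_of_succ_eq_mul (by omega) hQsucc hq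
  have hgeom : Summable (‖z‖ ^ ·) := summable_geometric_of_lt_one (norm_nonneg z) hz
  have hsum : Summable fun n => b n * z ^ n :=
    hgeom.of_norm_bounded fun n => by
      rw [norm_mul, norm_pow]
      exact mul_le_of_le_one_left (by positivity) (hb n)
  have hprod : Multipliable fun y => 1 + ∑ s ∈ Icc 1 (q (y + 1) - 1), c y s * z ^ (s * Q y) :=
    multipliable_one_add_of_summable <|
      ((hgeom.comp_injective hQmono.injective).div_const (1 - ‖z‖)).of_nonneg_of_le
        (fun _ => norm_nonneg _)
        fun y => norm_sum_Icc_mul_pow_mul_le (hc y) hz _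
          ((hQ0.symm ▸ Nat.one_pos).trans_le (hQmono.monotone y.zero_le))
  have hpartial := funext <|
    sum_range_mul_pow_eq_prod_one_add hQ0 hQsucc (fun n => by linarith [hq n]) hb0 hrec z
  refine tendsto_nhds_unique ?_ hprod.hasProd.tendsto_prod_nat
  rw [← hpartial]
  exact hsum.hasSum.tendsto_sum_nat.comp hQmono.tendsto_atTop

end Analytic

/-- Let `A_∞ = (b(n))` be the `(L,(q_n),(μ_n))`-TM sequence over the alphabet
`a_j = e^{2πij/L}` (encoded via the index sequence `u : ℕ → ZMod L` with `u 0 = 0` and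
`u (l·Q_n + r) = u r + μ_n l` for `1 ≤ l ≤ q_{n+1}−1`, `0 ≤ r < Q_n`, so that
`b(n) = e^{2πi·u(n)/L}`).  Then for `|z| < 1` the generating function satisfies
`Σ_n b(n) z^n = ∏_{y=0}^∞ (1 + Σ_{s=1}^{q_{y+1}−1} e^{2πi μ_y(s)/L} z^{s Q_y})`. -/
theorem stmt_9
    (L : ℕ) (hL : 2 ≤ L)
    (q : ℕ → ℕ) (hq0 : q 0 = 1) (hq : ∀ n, 1 ≤ n → 2 ≤ q n)
    (Q : ℕ → ℕ) (hQ : ∀ n, Q n = ∏ j ∈ Finset.range (n + 1), q j)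
    (μ : ℕ → ℕ → ZMod L)
    (u : ℕ → ZMod L) (hu0 : u 0 = 0)
    (hrec : ∀ n l r, 1 ≤ l → l ≤ q (n + 1) - 1 → r < Q n →
      u (l * Q n + r) = u r + μ n l)
    (z : ℂ) (hz : ‖z‖ < 1) :
    (∑' n : ℕ, Complex.exp (2 * Real.pi * Complex.I * ((u n).val : ℂ) / (L : ℂ)) * z ^ n) =
      ∏' y : ℕ, (1 + ∑ s ∈ Finset.Icc 1 (q (y + 1) - 1),
        Complex.exp (2 * Real.pi * Complex.I * ((μ y s).val : ℂ) / (L : ℂ)) * z ^ (s * Q y)) := by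
  have : NeZero L := ⟨by omega⟩
  have hψ : ∀ x : ZMod L,
      Complex.exp (2 * Real.pi * Complex.I * (x.val : ℂ) / L) = ZMod.stdAddChar x :=
    fun x => (ZMod.toCircle_apply x).symm
  have hnorm : ∀ x : ZMod L, ‖ZMod.stdAddChar x‖ ≤ 1 := fun x => (Circle.norm_coe _).le
  simp only [hψ]
  refine tsum_mul_pow_eq_tprod_one_add (by simp [hQ, hq0])
    (fun n => by rw [hQ, hQ, prod_range_succ, mul_comm]) (fun n => hq _ n.succ_pos)
    (by simp [hu0]) (fun n => hnorm _) (fun n s => hnorm _) (fun n l r hl hlq hr => ?_) hz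
  rw [hrec n l r hl hlq hr, AddChar.map_add_eq_mul, mul_comm]
end

section
/- Let (q_j)_{j=0}^∞ be an integer sequence with q_0 = 1 and q_j ≥ 2 for j ≥ 1. For a positive integer n with (q_j)-representation n = Σ_{y=0}^∞ s_{n,y} ∏_{j=0}^{y} q_j, let y_{n,min} := min{ y : s_{n,y} ≠ 0 }. Then for every positive integer l and every non-negative integer t, there exists a positive integer x such that the digits of n = x·l satisfy s_{n, y_{n,min}} = 1 and s_{n, y} = 0 for every y with y_{n,min} < y < y_{n,min} + t. -/
/-!
The divisors `gcd(l, Q_y)` of `l` increase with `y`, so they stabilise from some index `Y` on.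
Then `gcd(l, Q_{Y+t+1}) = gcd(l, Q_Y)` divides `Q_Y`, so the linear congruence
`Q_Y + a·Q_{Y+t+1} ≡ 0 (mod l)` has a solution `a`. The number `n = Q_Y + a·Q_{Y+t+1}` is a
multiple of `l` whose digits are `1` at position `Y`, zero at positions `Y+1, …, Y+t`, and the
digits of `a·Q_{Y+t+1}` from position `Y+t+1` on.
-/

section Digits

variable {q Q : ℕ → ℕ}

theorem exists_digits_mul (hq : ∀ y, 2 ≤ q (y + 1)) (hQ : ∀ y, Q (y + 1) = Q y * q (y + 1))
    (a s : ℕ) :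
    ∃ d : ℕ →₀ ℕ, (∀ y, d y ≤ q (y + 1) - 1) ∧ (∀ y, y < s → d y = 0) ∧
      (d.sum fun y c => c * Q y) = a * Q s := by
  induction a using Nat.strong_induction_on generalizing s with
  | _ a ih =>
    rcases Nat.eq_zero_or_pos a with rfl | ha
    · exact ⟨0, by simp, by simp, by simp⟩
    have hqs := hq s
    obtain ⟨d, hd_le, hd_zero, hd_sum⟩ :=
      ih (a / q (s + 1)) (Nat.div_lt_self ha (by omega)) (s + 1)
    have hds : d s = 0 := hd_zero s s.lt_succ_self
    refine ⟨d + Finsupp.single s (a % q (s + 1)), fun y => ?_, fun y hy => ?_, ?_⟩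
    · rcases eq_or_ne y s with rfl | hne
      · have := Nat.mod_lt a (show 0 < q (y + 1) by omega)
        simp only [Finsupp.add_apply, Finsupp.single_eq_same, hds]
        omega
      · simpa [Finsupp.single_eq_of_ne' hne.symm] using hd_le y
    · simp [hd_zero y (by omega), Finsupp.single_eq_of_ne' (show s ≠ y by omega)]
    · rw [Finsupp.sum_add_index' (by simp) (by intros; ring), Finsupp.sum_single_index (by simp),
        hd_sum, hQ]
      calc a / q (s + 1) * (Q s * q (s + 1)) + a % q (s + 1) * Q s
          = (q (s + 1) * (a / q (s + 1)) + a % q (s + 1)) * Q s := by ring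
        _ = a * Q s := by rw [Nat.div_add_mod]

theorem exists_digits_add_mul (hq : ∀ y, 2 ≤ q (y + 1)) (hQ : ∀ y, Q (y + 1) = Q y * q (y + 1))
    {Y s : ℕ} (hYs : Y < s) (a : ℕ) :
    ∃ d : ℕ →₀ ℕ, (∀ y, d y ≤ q (y + 1) - 1) ∧ (d.sum fun y c => c * Q y) = Q Y + a * Q s ∧
      d Y = 1 ∧ ∀ y, y ≠ Y → y < s → d y = 0 := by
  obtain ⟨d, hd_le, hd_zero, hd_sum⟩ := exists_digits_mul hq hQ a s
  have hdY : d Y = 0 := hd_zero Y hYs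
  refine ⟨d + Finsupp.single Y 1, fun y => ?_, ?_, by simp [hdY], fun y hne hy => ?_⟩
  · rcases eq_or_ne y Y with rfl | hne
    · have := hq y
      simp only [Finsupp.add_apply, Finsupp.single_eq_same, hdY]
      omega
    · simpa [Finsupp.single_eq_of_ne' hne.symm] using hd_le y
  · rw [Finsupp.sum_add_index' (by simp) (by intros; ring), Finsupp.sum_single_index (by simp),
      hd_sum, add_comm, one_mul]
  · simp [hd_zero y hy, Finsupp.single_eq_of_ne' hne.symm]

end Digits

theorem exists_gcd_eq_of_dvd_succ {l : ℕ} (hl : 0 < l) {Q : ℕ → ℕ} (hQ : ∀ y, Q y ∣ Q (y + 1)) :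
    ∃ Y, ∀ y, Y ≤ y → Nat.gcd l (Q y) = Nat.gcd l (Q Y) := by
  have hmono : Monotone fun y => Nat.gcd l (Q y) := monotone_nat_of_le_succ fun y =>
    Nat.le_of_dvd (Nat.gcd_pos_of_pos_left _ hl) (Nat.gcd_dvd_gcd_of_dvd_right _ (hQ y))
  have hle : ∀ y, Nat.gcd l (Q y) ≤ l := fun y => Nat.le_of_dvd hl (Nat.gcd_dvd_left _ _)
  -- `ℕ` satisfies the chain condition only for antitone sequences, hence `l - gcd l (Q y)`.
  obtain ⟨Y, hY⟩ := WellFoundedLT.antitone_chain_condition (α := ℕ)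
    (f := fun y => l - Nat.gcd l (Q y)) fun y y' h => Nat.sub_le_sub_left (hmono h) l
  refine ⟨Y, fun y hy => ?_⟩
  have : l - Nat.gcd l (Q Y) = l - Nat.gcd l (Q y) := hY y hy
  have := hle y
  have := hle Y
  omega

theorem Nat.exists_dvd_add_mul_of_gcd_dvd {l M b : ℕ} (hl : l ≠ 0) (h : Nat.gcd l M ∣ b) :
    ∃ a : ℕ, l ∣ b + a * M := by
  obtain ⟨c, rfl⟩ := h
  set k : ℤ := -(Nat.gcdB l M * c) with hk
  refine ⟨(k % l).toNat, Int.natCast_dvd_natCast.mp ?_⟩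
  have hmod : ((k % l).toNat : ℤ) = k - l * (k / l) := by
    rw [Int.toNat_of_nonneg (Int.emod_nonneg _ (by exact_mod_cast hl)), Int.emod_def]
  refine ⟨Nat.gcdA l M * c - k / l * M, ?_⟩
  push_cast
  rw [hmod, Nat.gcd_eq_gcd_ab, hk]
  ring

/-- For an integer sequence `(q_j)` with `q_0 = 1` and `q_j ≥ 2` for `j ≥ 1`,
for every positive integer `l` and every natural number `t` there is a positive integer `x`
such that in the `(q_j)`-representation of `n = x·l`, the least nonzero digit equals `1`
and the next `t − 1` digits above it vanish. -/
theorem stmt_10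
    (q : ℕ → ℕ) (hq0 : q 0 = 1) (hq : ∀ j, 1 ≤ j → 2 ≤ q j)
    (Q : ℕ → ℕ) (hQ : ∀ y, Q y = ∏ j ∈ Finset.range (y + 1), q j)
    (l : ℕ) (hl : 0 < l) (t : ℕ) :
    ∃ x : ℕ, 0 < x ∧ ∃ d : ℕ →₀ ℕ,
      (∀ y, d y ≤ q (y + 1) - 1) ∧
      x * l = ∑ y ∈ d.support, d y * Q y ∧
      ∃ ymin : ℕ,
        d ymin = 1 ∧ (∀ y, y < ymin → d y = 0) ∧
        (∀ y, ymin < y → y < ymin + t → d y = 0) := by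
  have hq_succ : ∀ y, 2 ≤ q (y + 1) := fun y => hq _ y.succ_pos
  have hQ_succ : ∀ y, Q (y + 1) = Q y * q (y + 1) := fun y => by
    rw [hQ, hQ, Finset.prod_range_succ]
  have hQ_pos : ∀ y, 0 < Q y := fun y => hQ y ▸ Finset.prod_pos fun j _ => by
    rcases j with _ | j
    · omega
    · have := hq_succ j
      omega
  obtain ⟨Y, hY⟩ := exists_gcd_eq_of_dvd_succ hl fun y => ⟨q (y + 1), hQ_succ y⟩
  have hgcd : Nat.gcd l (Q (Y + t + 1)) ∣ Q Y := by
    rw [hY _ (by omega)]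
    exact Nat.gcd_dvd_right _ _
  obtain ⟨a, x, hx⟩ := Nat.exists_dvd_add_mul_of_gcd_dvd hl.ne' hgcd
  obtain ⟨d, hd_le, hd_sum, hdY, hd_zero⟩ :=
    exists_digits_add_mul hq_succ hQ_succ (show Y < Y + t + 1 by omega) a
  refine ⟨x, Nat.pos_of_ne_zero ?_, d, hd_le, ?_, Y, hdY,
    fun y hy => hd_zero y (by omega) (by omega), fun y hy hyt => hd_zero y (by omega) (by omega)⟩
  · rintro rfl
    have := hQ_pos Y
    omega
  · rw [mul_comm, ← hx]
    exact hd_sum.symm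
end

section
/- Let A_∞ = (a(n))_{n=0}^∞ be an (L,(q_n),(μ_n))-TM sequence. Then A_∞ is ultimately periodic if and only if there exists an integer A ≥ 0 such that μ_{A+y}(s) ≡ μ_A(1) · s · ∏_{j=A+1}^{A+y} q_j (mod L) for all y ∈ ℕ and all s with 1 ≤ s ≤ q_{A+y+1}−1. -/
/-!
Let `u n` be the exponent with `a(n) = f^{u n}(a_0)`, so that `u (l * Q n + r) = u r + μ n l`.
If `u` has period `p` from `N` on, pick a level with `Q n ≥ N + p`: shifting the last `p` letters
of each block `A_n` across the block boundary gives `μ n l = l • u (Q n - p)`, and then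
`u (Q (n + 1) - p) = q (n + 1) • u (Q n - p)`; together these are the congruences.
Conversely, the congruences make `u` additive over blocks of length `Q A₀`:
`u n = u (n % Q A₀) + (n / Q A₀) • μ A₀ 1`, so `L * Q A₀` is a period.
-/

open Finset

theorem Finset.prod_range_add_eq_mul_prod_Icc {M : Type*} [CommMonoid M] (f : ℕ → M) (n y : ℕ) :
    ∏ j ∈ range (n + y + 1), f j = (∏ j ∈ range (n + 1), f j) * ∏ j ∈ Icc 1 y, f (n + j) := by
  induction y with
  | zero => simp
  | succ k ih =>
    rw [← add_assoc, prod_range_succ, ih, prod_Icc_succ_top (by omega), mul_assoc, add_assoc]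

namespace TMSequence

section Levels

variable {q Q : ℕ → ℕ}

theorem Q_add (hQ : ∀ n, Q n = ∏ j ∈ range (n + 1), q j) (n y : ℕ) :
    Q (n + y) = Q n * ∏ j ∈ Icc 1 y, q (n + j) := by
  rw [hQ, hQ, prod_range_add_eq_mul_prod_Icc]

theorem Q_succ (hQ : ∀ n, Q n = ∏ j ∈ range (n + 1), q j) (n : ℕ) :
    Q (n + 1) = Q n * q (n + 1) := by
  simpa using Q_add hQ n 1

theorem Q_pos (hq0 : q 0 = 1) (hq : ∀ n, 1 ≤ n → 2 ≤ q n)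
    (hQ : ∀ n, Q n = ∏ j ∈ range (n + 1), q j) (n : ℕ) : 0 < Q n := by
  rw [hQ]
  refine prod_pos fun j _ => ?_
  rcases j with _ | j
  · omega
  · have := hq (j + 1) (by omega)
    omega

theorem lt_Q (hq0 : q 0 = 1) (hq : ∀ n, 1 ≤ n → 2 ≤ q n)
    (hQ : ∀ n, Q n = ∏ j ∈ range (n + 1), q j) (n : ℕ) : n < Q n := by
  induction n with
  | zero => exact Q_pos hq0 hq hQ 0
  | succ n ih =>
    have := hq (n + 1) (by omega)
    rw [Q_succ hQ]
    nlinarith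

theorem Q_mono (hq : ∀ n, 1 ≤ n → 2 ≤ q n) (hQ : ∀ n, Q n = ∏ j ∈ range (n + 1), q j) :
    Monotone Q := by
  refine monotone_nat_of_le_succ fun n => ?_
  have := hq (n + 1) (by omega)
  rw [Q_succ hQ]
  exact Nat.le_mul_of_pos_right _ (by omega)

end Levels

structure IsIndexSeq {G : Type*} [AddCommMonoid G]
    (q Q : ℕ → ℕ) (μ : ℕ → ℕ → G) (u : ℕ → G) : Prop where
  apply_zero : u 0 = 0
  apply_digit : ∀ n l r, 1 ≤ l → l ≤ q (n + 1) - 1 → r < Q n → u (l * Q n + r) = u r + μ n l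

namespace IsIndexSeq

variable {G : Type*} [AddCommMonoid G] {q Q : ℕ → ℕ} {μ : ℕ → ℕ → G} {u : ℕ → G}

theorem apply_mul (hu : IsIndexSeq q Q μ u) {n l : ℕ} (hl1 : 1 ≤ l) (hl : l ≤ q (n + 1) - 1)
    (hQ : 0 < Q n) : u (l * Q n) = μ n l := by
  simpa [hu.apply_zero] using hu.apply_digit n l 0 hl1 hl hQ

theorem apply_mul_add (hu : IsIndexSeq q Q μ u) {n l r : ℕ} (hl : l ≤ q (n + 1) - 1)
    (hr : r < Q n) : u (l * Q n + r) = u (l * Q n) + u r := by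
  rcases Nat.eq_zero_or_pos l with rfl | hl1
  · simp [hu.apply_zero]
  · rw [hu.apply_digit n l r hl1 hl hr, hu.apply_mul hl1 hl (by omega), add_comm]

section Periodic

variable {N p : ℕ}

theorem apply_mul_eq_nsmul_of_periodic (hu : IsIndexSeq q Q μ u)
    (hper : ∀ m, N ≤ m → u (m + p) = u m) (hp : 0 < p) {n : ℕ} (hn : N + p ≤ Q n) :
    ∀ l ≤ q (n + 1) - 1, u (l * Q n) = l • u (Q n - p) := by
  intro l hl
  induction l with
  | zero => simp [hu.apply_zero]
  | succ k ih =>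
    calc u ((k + 1) * Q n) = u (k * Q n + (Q n - p) + p) := by congr 1; rw [add_mul]; omega
      _ = u (k * Q n + (Q n - p)) := hper _ (by omega)
      _ = u (k * Q n) + u (Q n - p) := hu.apply_mul_add (by omega) (by omega)
      _ = (k + 1) • u (Q n - p) := by rw [ih (by omega), succ_nsmul]

theorem apply_Q_succ_sub (hu : IsIndexSeq q Q μ u)
    (hper : ∀ m, N ≤ m → u (m + p) = u m) (hp : 0 < p) (hq : ∀ n, 1 ≤ n → 2 ≤ q n)
    (hQ : ∀ n, Q n = ∏ j ∈ range (n + 1), q j) {n : ℕ} (hn : N + p ≤ Q n) :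
    u (Q (n + 1) - p) = q (n + 1) • u (Q n - p) := by
  obtain ⟨k, hk⟩ : ∃ k, q (n + 1) = k + 1 := ⟨q (n + 1) - 1, by have := hq (n + 1) (by omega); omega⟩
  have hk' : k ≤ q (n + 1) - 1 := by omega
  calc u (Q (n + 1) - p) = u (k * Q n + (Q n - p)) := by
        congr 1
        rw [Q_succ hQ, hk, mul_add, mul_one, mul_comm]
        omega
    _ = q (n + 1) • u (Q n - p) := by
        rw [hu.apply_mul_add hk' (by omega), hu.apply_mul_eq_nsmul_of_periodic hper hp hn k hk',
          hk, succ_nsmul]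

theorem apply_Q_add_sub (hu : IsIndexSeq q Q μ u)
    (hper : ∀ m, N ≤ m → u (m + p) = u m) (hp : 0 < p) (hq : ∀ n, 1 ≤ n → 2 ≤ q n)
    (hQ : ∀ n, Q n = ∏ j ∈ range (n + 1), q j) {B : ℕ} (hB : N + p ≤ Q B) (y : ℕ) :
    u (Q (B + y) - p) = (∏ j ∈ Icc 1 y, q (B + j)) • u (Q B - p) := by
  induction y with
  | zero => simp
  | succ k ih =>
    rw [← add_assoc, hu.apply_Q_succ_sub hper hp hq hQ (hB.trans (Q_mono hq hQ (by omega))), ih,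
      prod_Icc_succ_top (by omega), mul_nsmul, add_assoc]

theorem exists_mu_eq_nsmul_of_periodic (hu : IsIndexSeq q Q μ u) (hq0 : q 0 = 1)
    (hq : ∀ n, 1 ≤ n → 2 ≤ q n) (hQ : ∀ n, Q n = ∏ j ∈ range (n + 1), q j) (hp : 0 < p)
    (hper : ∀ m, N ≤ m → u (m + p) = u m) :
    ∃ A₀, ∀ y s, 1 ≤ s → s ≤ q (A₀ + y + 1) - 1 →
      μ (A₀ + y) s = (s * ∏ j ∈ Icc 1 y, q (A₀ + j)) • μ A₀ 1 := by
  set B := N + p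
  have hB : N + p ≤ Q B := (lt_Q hq0 hq hQ B).le
  refine ⟨B, fun y s hs1 hs => ?_⟩
  have hBy : N + p ≤ Q (B + y) := hB.trans (Q_mono hq hQ (by omega))
  have h1 : 1 ≤ q (B + 1) - 1 := by have := hq (B + 1) (by omega); omega
  rw [← hu.apply_mul hs1 hs (by omega), ← hu.apply_mul le_rfl h1 (by omega),
    hu.apply_mul_eq_nsmul_of_periodic hper hp hBy s hs, hu.apply_Q_add_sub hper hp hq hQ hB,
    hu.apply_mul_eq_nsmul_of_periodic hper hp hB 1 h1, one_nsmul, mul_nsmul']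

end Periodic

section Linear

variable {B : ℕ}

theorem apply_eq_mod_add_div_nsmul (hu : IsIndexSeq q Q μ u) (hq0 : q 0 = 1)
    (hq : ∀ n, 1 ≤ n → 2 ≤ q n) (hQ : ∀ n, Q n = ∏ j ∈ range (n + 1), q j)
    (hμ : ∀ y s, 1 ≤ s → s ≤ q (B + y + 1) - 1 →
      μ (B + y) s = (s * ∏ j ∈ Icc 1 y, q (B + j)) • μ B 1) (n : ℕ) :
    u n = u (n % Q B) + (n / Q B) • μ B 1 := by
  have hQB := Q_pos hq0 hq hQ B
  suffices ∀ y, ∀ n < Q (B + y), u n = u (n % Q B) + (n / Q B) • μ B 1 from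
    this n n ((lt_Q hq0 hq hQ n).trans_le (Q_mono hq hQ (by omega)))
  intro y
  induction y with
  | zero =>
    intro n hn
    rw [add_zero] at hn
    simp [Nat.mod_eq_of_lt hn, Nat.div_eq_of_lt hn]
  | succ y ih =>
    intro n hn
    set M := Q (B + y)
    set P := ∏ j ∈ Icc 1 y, q (B + j)
    have hM : M = Q B * P := Q_add hQ B y
    have hMpos : 0 < M := Q_pos hq0 hq hQ _
    have hr : n % M < M := Nat.mod_lt _ hMpos
    have hl : n / M ≤ q (B + y + 1) - 1 := by
      have hn' : n < M * q (B + y + 1) := by rwa [← add_assoc, Q_succ hQ] at hn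
      have := Nat.div_lt_of_lt_mul hn'
      omega
    have hdigit : u (n / M * M) = (n / M * P) • μ B 1 := by
      rcases Nat.eq_zero_or_pos (n / M) with h0 | hl1
      · simp [h0, hu.apply_zero]
      · rw [hu.apply_mul hl1 hl hMpos, hμ y _ hl1 hl]
    have hdiv : n / Q B = n / M * P + n % M / Q B := by
      calc n / Q B = (Q B * (n / M * P) + n % M) / Q B := by
            congr 1
            calc n = n / M * M + n % M := (Nat.div_add_mod' n M).symm
              _ = Q B * (n / M * P) + n % M := by rw [hM]; ring
        _ = n / M * P + n % M / Q B := Nat.mul_add_div hQB _ _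
    calc u n = u (n / M * M + n % M) := by rw [Nat.div_add_mod']
      _ = u (n / M * M) + u (n % M) := hu.apply_mul_add hl hr
      _ = (n / M * P) • μ B 1 + (u (n % M % Q B) + (n % M / Q B) • μ B 1) := by
        rw [hdigit, ih _ hr]
      _ = u (n % Q B) + (n / Q B) • μ B 1 := by
        rw [Nat.mod_mod_of_dvd n (hM ▸ dvd_mul_right _ _), hdiv, add_nsmul]
        abel

theorem apply_add_mul_Q (hu : IsIndexSeq q Q μ u) (hq0 : q 0 = 1)
    (hq : ∀ n, 1 ≤ n → 2 ≤ q n) (hQ : ∀ n, Q n = ∏ j ∈ range (n + 1), q j)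
    (hμ : ∀ y s, 1 ≤ s → s ≤ q (B + y + 1) - 1 →
      μ (B + y) s = (s * ∏ j ∈ Icc 1 y, q (B + j)) • μ B 1) (n k : ℕ) :
    u (n + k * Q B) = u n + k • μ B 1 := by
  rw [hu.apply_eq_mod_add_div_nsmul hq0 hq hQ hμ (n + k * Q B), Nat.add_mul_mod_self_right,
    Nat.add_mul_div_right _ _ (Q_pos hq0 hq hQ B), add_nsmul, ← add_assoc,
    ← hu.apply_eq_mod_add_div_nsmul hq0 hq hQ hμ n]

end Linear

end IsIndexSeq

end TMSequence

/-- Let `A_∞ = (A n)` be an `(L,(q_n),(μ_n))`-TM sequence (encoded as in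
Statement 8 by an injective `aVec : ZMod L → ℂ` and an index sequence `u` with `u 0 = 0`
and `u (l·Q_n + r) = u r + μ_n l`).  Then `A_∞` is ultimately periodic if and only if
there exists an integer `A ≥ 0` such that
`μ_{A+y}(s) ≡ μ_A(1)·s·∏_{j=A+1}^{A+y} q_j (mod L)`
for all `y ∈ ℕ` and all `1 ≤ s ≤ q_{A+y+1}−1`. -/
theorem stmt_11
    (L : ℕ) (hL : 2 ≤ L)
    (aVec : ZMod L → ℂ) (hdist : Function.Injective aVec)
    (q : ℕ → ℕ) (hq0 : q 0 = 1) (hq : ∀ n, 1 ≤ n → 2 ≤ q n)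
    (Q : ℕ → ℕ) (hQ : ∀ n, Q n = ∏ j ∈ Finset.range (n + 1), q j)
    (μ : ℕ → ℕ → ZMod L)
    (u : ℕ → ZMod L) (hu0 : u 0 = 0)
    (hrec : ∀ n l r, 1 ≤ l → l ≤ q (n + 1) - 1 → r < Q n →
      u (l * Q n + r) = u r + μ n l)
    (A : ℕ → ℂ) (hA : ∀ n, A n = aVec (u n)) :
    (∃ N : ℕ, ∃ p : ℕ, 0 < p ∧ ∀ n, N ≤ n → A (n + p) = A n) ↔
      (∃ A₀ : ℕ, ∀ y s, 1 ≤ s → s ≤ q (A₀ + y + 1) - 1 →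
        μ (A₀ + y) s = ((s * ∏ j ∈ Finset.Icc 1 y, q (A₀ + j) : ℕ) : ZMod L) * μ A₀ 1) := by
  have hu : TMSequence.IsIndexSeq q Q μ u := ⟨hu0, hrec⟩
  simp only [← nsmul_eq_mul]
  constructor
  · rintro ⟨N, p, hp, hper⟩
    exact hu.exists_mu_eq_nsmul_of_periodic hq0 hq hQ hp fun n hn => hdist <| by
      rw [← hA, ← hA, hper n hn]
  · rintro ⟨B, hμ⟩
    refine ⟨0, L * Q B, Nat.mul_pos (by omega) (TMSequence.Q_pos hq0 hq hQ B), fun n _ => ?_⟩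
    rw [hA, hA, hu.apply_add_mul_Q hq0 hq hQ hμ, nsmul_eq_mul, ZMod.natCast_self, zero_mul,
      add_zero]
end

section
/- Let A_∞ = (a(n))_{n=0}^∞ be an (L,(q_n),(μ_n))-TM sequence. If A_∞ is not ultimately periodic, then for every integer N ≥ 0 and every integer l > 0 the arithmetic subsequence (a(N + n l))_{n=0}^∞ is not ultimately periodic. -/
/-!
The defining recursion makes the exponent sequence `u` (with `A n = aVec (u n)`) additive across
every cut `m Q_k + r` with `r < Q_k`, so `w m := u (m Q_k)` determines `u` on each block. Take `Q_k`
larger than the window in which the progression `N + n l` is already `p`-periodic. Each block ends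
with a term of the progression whose `p`-th successor lies in the next block, and these positions
repeat with period `l` in `m` because `l Q_k` is a multiple of `l`; hence `w (m + 1) - w m` is
`l`-periodic. So `w (m + l) = w m + Δ`, and since `L • Δ = 0` in `ZMod L`, `A` has period `L l Q_k`.
-/

section Periodicity

variable {G : Type*} [AddCommGroup G]

theorem add_mul_eq_add_nsmul_of_sub_periodic {f : ℕ → G} {l : ℕ}
    (h : ∀ m, f (m + l + 1) - f (m + l) = f (m + 1) - f m) (m j : ℕ) :
    f (m + j * l) = f m + j • (f l - f 0) := by
  have hshift : ∀ m, f (m + l) = f m + (f l - f 0) := by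
    intro m
    induction m with
    | zero => rw [zero_add]; abel
    | succ m ih =>
      rw [add_right_comm, ← sub_add_cancel (f (m + l + 1)) (f (m + l)), h, ih]
      abel
  induction j with
  | zero => simp
  | succ j ih => rw [add_mul, one_mul, ← add_assoc, hshift, ih, succ_nsmul]; abel

def BlockAdditive (u : ℕ → G) (P : ℕ) : Prop :=
  ∀ m r, r < P → u (m * P + r) = u (m * P) + u r

/-- `N + c l = m P + r` is a term of the progression in the block `[m P, (m + 1) P)` whose
`p`-th successor `(m + 1) P + s` lies in the next block. -/
theorem exists_progression_crossing {N M l p P : ℕ} (hl : 0 < l) (hp : 0 < p)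
    (hP : N + M * l + p * l ≤ P) (m : ℕ) :
    ∃ c r s, M ≤ c ∧ m * P + r = N + c * l ∧ r + p * l = P + s ∧ r < P ∧ s < P := by
  set Y := m * P + P - 1 - N
  have hY := Nat.div_add_mod' Y l
  have hmod := Nat.mod_lt Y hl
  have hlp : l ≤ p * l := Nat.le_mul_of_pos_left l hp
  have hM : M ≤ Y / l := Nat.le_of_mul_le_mul_right (by omega) hl
  exact ⟨Y / l, N + Y / l * l - m * P, N + Y / l * l - m * P + p * l - P, hM,
    by omega, by omega, by omega, by omega⟩

namespace BlockAdditive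

variable {u : ℕ → G} {P N M l p : ℕ}

theorem sub_eq_of_crossing (hu : BlockAdditive u P)
    (hper : ∀ n, M ≤ n → u (N + (n + p) * l) = u (N + n * l)) {m c r s : ℕ} (hc : M ≤ c)
    (hr : m * P + r = N + c * l) (hs : r + p * l = P + s) (hrP : r < P) (hsP : s < P) :
    u ((m + 1) * P) - u (m * P) = u r - u s := by
  have key := hper c hc
  have hcross : N + (c + p) * l = (m + 1) * P + s := by
    rw [add_mul, add_mul, one_mul, ← add_assoc, ← hr]; omega
  rw [hcross, ← hr, hu _ _ hsP, hu _ _ hrP] at key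
  rw [sub_eq_sub_iff_add_eq_add, key, add_comm]

theorem exists_drift (hu : BlockAdditive u P) (hl : 0 < l) (hp : 0 < p)
    (hP : N + M * l + p * l ≤ P) (hper : ∀ n, M ≤ n → u (N + (n + p) * l) = u (N + n * l)) :
    ∃ Δ : G, ∀ z j, u (z + j * l * P) = u z + j • Δ := by
  have hdiff : ∀ m, u ((m + l + 1) * P) - u ((m + l) * P) = u ((m + 1) * P) - u (m * P) := by
    intro m
    obtain ⟨c, r, s, hc, hr, hs, hrP, hsP⟩ := exists_progression_crossing hl hp hP m
    have hr' : (m + l) * P + r = N + (c + P) * l := by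
      rw [add_mul, add_mul, add_right_comm, hr, add_assoc, mul_comm l P]
    rw [hu.sub_eq_of_crossing hper hc hr hs hrP hsP,
      hu.sub_eq_of_crossing hper (hc.trans (Nat.le_add_right c P)) hr' hs hrP hsP]
  have hdrift : ∀ m j, u ((m + j * l) * P) = u (m * P) + j • (u (l * P) - u (0 * P)) :=
    add_mul_eq_add_nsmul_of_sub_periodic (f := fun m => u (m * P)) hdiff
  have hPpos : 0 < P := by have := Nat.mul_pos hp hl; omega
  refine ⟨u (l * P) - u (0 * P), fun z j => ?_⟩
  have hz := hu (z / P) (z % P) (Nat.mod_lt z hPpos)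
  rw [Nat.div_add_mod'] at hz
  calc u (z + j * l * P) = u ((z / P + j * l) * P + z % P) := by
        rw [add_mul, add_right_comm, Nat.div_add_mod']
    _ = u z + j • (u (l * P) - u (0 * P)) := by
        rw [hu _ _ (Nat.mod_lt z hPpos), hdrift, hz, add_right_comm]

end BlockAdditive

end Periodicity

/-- `blockLength q n = q 0 * q 1 * ⋯ * q n` is the length of the word `A_n`. -/
def blockLength (q : ℕ → ℕ) (n : ℕ) : ℕ := ∏ j ∈ Finset.range (n + 1), q j

section BlockLength

variable {q : ℕ → ℕ}

theorem blockLength_zero : blockLength q 0 = q 0 := by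
  simp [blockLength]

theorem blockLength_succ (n : ℕ) : blockLength q (n + 1) = blockLength q n * q (n + 1) :=
  Finset.prod_range_succ _ _

theorem blockLength_dvd_blockLength {k n : ℕ} (h : k ≤ n) : blockLength q k ∣ blockLength q n :=
  Finset.prod_dvd_prod_of_subset _ _ _ (Finset.range_subset_range.2 (by omega))

theorem blockLength_pos (hq : ∀ j, 0 < q j) (n : ℕ) : 0 < blockLength q n :=
  Finset.prod_pos fun j _ => hq j

theorem lt_blockLength (hq0 : 0 < q 0) (hq : ∀ n, 1 ≤ n → 2 ≤ q n) (n : ℕ) :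
    n < blockLength q n := by
  induction n with
  | zero => rwa [blockLength_zero]
  | succ n ih =>
    rw [blockLength_succ]
    have := hq (n + 1) (by omega)
    nlinarith

end BlockLength

theorem add_lt_of_dvd_of_lt {d s n b : ℕ} (hs : d ∣ s) (hn : d ∣ n) (hsn : s < n) (hb : b < d) :
    s + b < n := by
  have := Nat.le_of_dvd (Nat.sub_pos_of_lt hsn) (Nat.dvd_sub hn hs)
  omega

section Recursion

variable {G : Type*} [AddCommGroup G] {q : ℕ → ℕ} {u : ℕ → G}

theorem map_add_of_blockLength_dvd (hq0 : q 0 = 1) (hq : ∀ n, 1 ≤ n → 2 ≤ q n) (hu0 : u 0 = 0)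
    {μ : ℕ → ℕ → G}
    (hrec : ∀ n l r, 1 ≤ l → l ≤ q (n + 1) - 1 → r < blockLength q n →
      u (l * blockLength q n + r) = u r + μ n l)
    {k a b : ℕ} (ha : blockLength q k ∣ a) (hb : b < blockLength q k) :
    u (a + b) = u a + u b := by
  have hpos : ∀ n, 0 < blockLength q n := blockLength_pos fun j => by
    rcases j with _ | j
    · omega
    · have := hq (j + 1) (by omega); omega
  suffices ∀ n a, blockLength q k ∣ a → a < blockLength q n → u (a + b) = u a + u b from
    this a a ha (lt_blockLength (by omega) hq a)
  intro n
  induction n with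
  | zero =>
    intro a _ ha0
    rw [blockLength_zero, hq0] at ha0
    obtain rfl : a = 0 := by omega
    rw [hu0, zero_add, zero_add]
  | succ n ih =>
    intro a ha ha'
    rcases lt_or_ge a (blockLength q n) with h | h
    · exact ih a ha h
    have hkn : k ≤ n := by
      by_contra! hnk
      have : blockLength q (n + 1) ≤ a :=
        Nat.le_of_dvd (by have := hpos n; omega) ((blockLength_dvd_blockLength hnk).trans ha)
      omega
    have hdvd := blockLength_dvd_blockLength (q := q) hkn
    set l := a / blockLength q n
    set s := a % blockLength q n
    have hs : s < blockLength q n := Nat.mod_lt _ (hpos n)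
    have hsb : s + b < blockLength q n :=
      add_lt_of_dvd_of_lt ((Nat.dvd_mod_iff hdvd).2 ha) hdvd hs hb
    have hl1 : 1 ≤ l := Nat.div_pos h (hpos n)
    have hlq : l ≤ q (n + 1) - 1 := by
      have : l < q (n + 1) := by
        rwa [Nat.div_lt_iff_lt_mul (hpos n), mul_comm, ← blockLength_succ]
      omega
    have hsplit : a = l * blockLength q n + s := (Nat.div_add_mod' a _).symm
    rw [hsplit, add_assoc, hrec n l _ hl1 hlq hsb, hrec n l _ hl1 hlq hs,
      ih s ((Nat.dvd_mod_iff hdvd).2 ha) hs]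
    abel

end Recursion

/-- Let `A_∞ = (A n)` be an `(L,(q_n),(μ_n))`-TM sequence (encoded as in
Statement 8).  If `A_∞` is not ultimately periodic, then for every `N ≥ 0` and every `l > 0`
the arithmetic subsequence `(A (N + n·l))_n` is not ultimately periodic. -/
theorem stmt_12
    (L : ℕ) (hL : 2 ≤ L)
    (aVec : ZMod L → ℂ) (hdist : Function.Injective aVec)
    (q : ℕ → ℕ) (hq0 : q 0 = 1) (hq : ∀ n, 1 ≤ n → 2 ≤ q n)
    (Q : ℕ → ℕ) (hQ : ∀ n, Q n = ∏ j ∈ Finset.range (n + 1), q j)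
    (μ : ℕ → ℕ → ZMod L)
    (u : ℕ → ZMod L) (hu0 : u 0 = 0)
    (hrec : ∀ n l r, 1 ≤ l → l ≤ q (n + 1) - 1 → r < Q n →
      u (l * Q n + r) = u r + μ n l)
    (A : ℕ → ℂ) (hA : ∀ n, A n = aVec (u n))
    (hnp : ¬ ∃ N : ℕ, ∃ p : ℕ, 0 < p ∧ ∀ n, N ≤ n → A (n + p) = A n) :
    ∀ N l : ℕ, 0 < l →
      ¬ ∃ M : ℕ, ∃ p : ℕ, 0 < p ∧ ∀ n, M ≤ n → A (N + (n + p) * l) = A (N + n * l) := by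
  rintro N l hl ⟨M, p, hp, hper⟩
  obtain rfl : Q = blockLength q := funext hQ
  have hperu : ∀ n, M ≤ n → u (N + (n + p) * l) = u (N + n * l) := fun n hn =>
    hdist (by rw [← hA, ← hA, hper n hn])
  set k := N + M * l + p * l
  have hblock : BlockAdditive u (blockLength q k) := fun m r hr =>
    map_add_of_blockLength_dvd hq0 hq hu0 hrec (dvd_mul_left _ _) hr
  have hk : k < blockLength q k := lt_blockLength (by omega) hq k
  obtain ⟨Δ, hΔ⟩ := hblock.exists_drift hl hp hk.le hperu
  refine hnp ⟨0, L * l * blockLength q k,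
    Nat.mul_pos (Nat.mul_pos (by omega) hl) (Nat.zero_lt_of_lt hk), fun n _ => ?_⟩
  rw [hA, hA, hΔ, nsmul_eq_mul, ZMod.natCast_self, zero_mul, add_zero]
end

section
/- Let (q_j)_{j=0}^∞ be an integer sequence with q_0 = 1 and q_j ≥ 2 for j ≥ 1, and let c_{s,y} be rational numbers for y ≥ 0 and 1 ≤ s ≤ q_{y+1}−1. Let Σ_{m=0}^∞ a_0(m) z^m be the formal Taylor expansion of ∏_{y=0}^∞ (1 + Σ_{s=1}^{q_{y+1}−1} c_{s,y} z^{s ∏_{j=0}^{y} q_j}), and set Q_n := ∏_{j=0}^{n} q_j. Then for every n ∈ ℕ and every integer l ≥ 0 there exists a rational number f_{l,n} (with f_{0,n} = 1) such that a_0(l·Q_n + r) = f_{l,n} · a_0(r) for all integers r with 0 ≤ r ≤ Q_n − 1. -/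
/-!
Each factor `1 + Σ_s c_{s,y} X^{s Q_y}` is the expansion by `X ↦ X^{Q_y}` of a polynomial of
degree `< q_{y+1}`, so, as in mixed-radix notation, the partial product `P_n` over `y < n` has
degree `< Q_n`, while the tail product over `n ≤ y < Y` is a polynomial `u(X^{Q_n})` because
`Q_n ∣ Q_y`. In `P_n · u(X^{Q_n})` the exponent `l Q_n + r` with `r < Q_n` then arises only as
`r + l Q_n`, so `a₀(l Q_n + r) = [X^r] P_n · [X^l] u = a₀(r) · a₀(l Q_n)`.
-/

open Polynomial Finset

namespace Polynomial

variable {R : Type*} [CommSemiring R]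

theorem expand_one_add_sum_C_mul_X_pow (k : ℕ) (S : Finset ℕ) (b : ℕ → R) :
    expand R k (1 + ∑ s ∈ S, C (b s) * X ^ s) = 1 + ∑ s ∈ S, C (b s) * X ^ (s * k) := by
  simp only [map_add, map_one, map_sum, map_mul, expand_C, map_pow, expand_X, pow_mul']

theorem natDegree_one_add_sum_C_mul_X_pow_le {S : Finset ℕ} {N : ℕ} (hS : ∀ s ∈ S, s ≤ N)
    (b : ℕ → R) : (1 + ∑ s ∈ S, C (b s) * X ^ s).natDegree ≤ N := by
  refine (natDegree_add_le _ _).trans (max_le (by rw [natDegree_one]; exact N.zero_le) ?_)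
  exact natDegree_sum_le_of_forall_le _ _ fun s hs =>
    (natDegree_C_mul_X_pow_le _ _).trans (hS s hs)

theorem prod_expand_eq_expand_prod {ι : Type*} (S : Finset ι) (k : ι → ℕ) (g : ι → R[X])
    {d : ℕ} (hd : ∀ i ∈ S, d ∣ k i) :
    ∏ i ∈ S, expand R (k i) (g i) = expand R d (∏ i ∈ S, expand R (k i / d) (g i)) := by
  rw [map_prod]
  refine prod_congr rfl fun i hi => ?_
  rw [← expand_mul, Nat.mul_div_cancel' (hd i hi)]

theorem natDegree_prod_range_expand_lt {q Q : ℕ → ℕ} {g : ℕ → R[X]} (hQ0 : 0 < Q 0)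
    (hQ : ∀ y, Q (y + 1) = Q y * q (y + 1)) (hg : ∀ y, (g y).natDegree < q (y + 1)) (n : ℕ) :
    (∏ y ∈ range n, expand R (Q y) (g y)).natDegree < Q n := by
  induction n with
  | zero => simpa using hQ0
  | succ n ih =>
    rw [prod_range_succ, hQ]
    calc (_ * expand R (Q n) (g n)).natDegree
        ≤ (∏ y ∈ range n, expand R (Q y) (g y)).natDegree + (g n).natDegree * Q n := by
          rw [← natDegree_expand]; exact natDegree_mul_le
      _ < Q n + (g n).natDegree * Q n := by omega
      _ = ((g n).natDegree + 1) * Q n := by ring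
      _ ≤ Q n * q (n + 1) := by rw [mul_comm]; exact Nat.mul_le_mul_left _ (hg n)

theorem coeff_mul_expand_of_natDegree_lt {p : R[X]} {d : ℕ} (hp : p.natDegree < d)
    (u : R[X]) (l : ℕ) {r : ℕ} (hr : r < d) :
    (p * expand R d u).coeff (l * d + r) = p.coeff r * u.coeff l := by
  have hd : 0 < d := by omega
  rw [coeff_mul, sum_eq_single (r, l * d)]
  · rw [coeff_expand_mul hd]
  · rintro ⟨i, j⟩ hij hne
    rw [HasAntidiagonal.mem_antidiagonal] at hij
    by_cases hi : p.coeff i = 0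
    · rw [hi, zero_mul]
    have hid : i < d := (le_natDegree_of_ne_zero hi).trans_lt hp
    rw [coeff_expand hd, if_neg, mul_zero]
    rintro ⟨t, rfl⟩
    -- reducing `i + d t = l d + r` modulo `d` forces `i = r`
    have hir : i = r := by
      have := congrArg (· % d) hij
      simp only [mul_comm d t, Nat.add_mul_mod_self_right, Nat.mod_eq_of_lt hid,
        add_comm (l * d), Nat.mod_eq_of_lt hr] at this
      exact this
    exact hne (Prod.ext hir (by simp only; omega))
  · exact fun h => absurd (HasAntidiagonal.mem_antidiagonal.mpr (add_comm _ _)) h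

end Polynomial

theorem lt_prod_range_succ {q : ℕ → ℕ} (hq0 : 1 ≤ q 0) (hq : ∀ j, 1 ≤ j → 2 ≤ q j) (y : ℕ) :
    y < ∏ j ∈ range (y + 1), q j := by
  calc y < 2 ^ y := Nat.lt_two_pow_self
    _ = 2 ^ (range y).card * 1 := by rw [card_range, mul_one]
    _ ≤ (∏ j ∈ range y, q (j + 1)) * q 0 :=
        Nat.mul_le_mul (pow_card_le_prod _ _ _ fun j _ => hq _ (by omega)) hq0
    _ = ∏ j ∈ range (y + 1), q j := (prod_range_succ' _ _).symm

/-- increase hidden infinite copy structure: Let `(q_j)` satisfy `q_0 = 1`,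
`q_j ≥ 2` (`j ≥ 1`), let `c_{s,y}` be rational numbers and let `Σ a₀(m) z^m` be the formal
Taylor expansion of `∏_{y=0}^∞ (1 + Σ_{s=1}^{q_{y+1}−1} c_{s,y} z^{s Q_y})` (formally,
`a₀(m)` agrees with the `m`-th coefficient of the partial product over `y < Y` whenever
`m < Q_Y`).  Then for every `n` there are rationals `f_{l,n}` with `f_{0,n} = 1` such that
`a₀(l·Q_n + r) = f_{l,n} · a₀(r)` for all `0 ≤ r ≤ Q_n − 1`. -/
theorem stmt_16
    (q : ℕ → ℕ) (hq0 : q 0 = 1) (hq : ∀ j, 1 ≤ j → 2 ≤ q j)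
    (Q : ℕ → ℕ) (hQ : ∀ y, Q y = ∏ j ∈ Finset.range (y + 1), q j)
    (c : ℕ → ℕ → ℚ)
    (a : ℕ → ℚ)
    (ha : ∀ Y m : ℕ, m < Q Y →
      a m = (∏ y ∈ Finset.range Y,
        (1 + ∑ s ∈ Finset.Icc 1 (q (y + 1) - 1),
          Polynomial.C (c s y) * (Polynomial.X : Polynomial ℚ) ^ (s * Q y))).coeff m) :
    ∀ n : ℕ, ∃ f : ℕ → ℚ, f 0 = 1 ∧
      ∀ l r : ℕ, r ≤ Q n - 1 → a (l * Q n + r) = f l * a r := by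
  intro n
  set g : ℕ → ℚ[X] := fun y => 1 + ∑ s ∈ Icc 1 (q (y + 1) - 1), C (c s y) * X ^ s
  have hP : ∀ Y m, m < Q Y → a m = (∏ y ∈ range Y, expand ℚ (Q y) (g y)).coeff m := by
    simpa only [g, expand_one_add_sum_C_mul_X_pow] using ha
  have hQ_lt : ∀ y, y < Q y := fun y => hQ y ▸ lt_prod_range_succ hq0.ge hq y
  have hQ_dvd : ∀ y, n ≤ y → Q n ∣ Q y := fun y hy => by
    rw [hQ, hQ]; exact prod_dvd_prod_of_subset _ _ _ (range_subset_range.mpr (by omega))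
  have hQ0 : Q 0 = 1 := by rw [hQ, prod_range_one, hq0]
  have hdeg : (∏ y ∈ range n, expand ℚ (Q y) (g y)).natDegree < Q n :=
    natDegree_prod_range_expand_lt (q := q) (by omega) (fun y => by rw [hQ, hQ, prod_range_succ])
      (fun y => (natDegree_one_add_sum_C_mul_X_pow_le (fun s hs => (mem_Icc.mp hs).2) _).trans_lt
        (by have := hq (y + 1); omega)) n
  have hcopy : ∀ l, ∃ t : ℚ, ∀ r < Q n, a (l * Q n + r) = a r * t := by
    intro l
    set Y := n + (l + 1) * Q n
    refine ⟨(∏ y ∈ Ico n Y, expand ℚ (Q y / Q n) (g y)).coeff l, fun r hr => ?_⟩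
    have hm : l * Q n + r < Q Y := lt_trans (by simp only [Y]; nlinarith) (hQ_lt Y)
    rw [hP Y _ hm, ← prod_range_mul_prod_Ico _ (by omega : n ≤ Y),
      prod_expand_eq_expand_prod _ _ _ fun y hy => hQ_dvd y (mem_Ico.mp hy).1,
      coeff_mul_expand_of_natDegree_lt hdeg _ _ hr, ← hP n r hr]
  have ha0 : a 0 = 1 := by simpa using hP 0 0 (by omega)
  refine ⟨fun l => a (l * Q n), by simpa using ha0, fun l r hr => ?_⟩
  obtain ⟨t, ht⟩ := hcopy l
  have hQn : 0 < Q n := (Nat.zero_le n).trans_lt (hQ_lt n)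
  have hl : a (l * Q n) = t := by simpa [ha0] using ht 0 hQn
  rw [ht r (by omega), ← hl, mul_comm]
end
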